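/- arXiv:1212.6618 — 3 statements merged into one kernel-verified Lean document; each statement's English description precedes it below -/
import Mathlib

section
/- Let Ā ∈ so(n) have spectrum contained in the open interval i(-π, π), and let ρ be an orthogonal involution with ρ exp(Ā) ρ = exp(Ā)⁻¹ (equivalently ρ exp(Ā) = exp(-Ā) ρ). Then ρ Ā ρ = -Ā, and consequently exp(-Ā τ) ρ = ρ exp(Ā τ) for all τ ∈ ℝ. -/
/-!
After complexifying, `Ā` is skew-Hermitian with spectrum in the strip `|Im μ| < π`, hence
diagonalisable, and a polynomial `p` interpolating the principal logarithm at the eigenvalues of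
`exp Ā` and `exp (-Ā)` satisfies `p (exp Ā) = Ā` and `p (exp (-Ā)) = -Ā`. Polynomials preserve
the relation `ρ x = y ρ`, so `ρ exp Ā = exp (-Ā) ρ` gives `ρ Ā = -Ā ρ`, which exponentiates to
the same relation for `τ Ā`.
-/

open Matrix Polynomial

theorem SemiconjBy.aeval {R A : Type*} [CommSemiring R] [Semiring A] [Algebra R A] {a x y : A}
    (h : SemiconjBy a x y) (p : R[X]) : SemiconjBy a (aeval x p) (aeval y p) := by
  induction p using Polynomial.induction_on' with
  | add p q hp hq => simpa only [map_add] using hp.add_right hq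
  | monomial n r =>
    simp only [aeval_monomial]
    exact SemiconjBy.mul_right (Algebra.commutes r a).symm (h.pow_right n)

theorem Polynomial.aeval_units_conj {R A : Type*} [CommSemiring R] [Ring A] [Algebra R A]
    (u : Aˣ) (x : A) (p : R[X]) : aeval (u * x * ↑u⁻¹ : A) p = u * aeval x p * ↑u⁻¹ := by
  simpa only [ConjAct.units_smul_def, ConjAct.ofConjAct_toConjAct] using
    aeval_smul p (ConjAct.toConjAct u) x

theorem Complex.exists_polynomial_eval_exp_eq {S : Set ℂ} (hS : S.Finite)
    (hS_im : ∀ μ ∈ S, μ.im ∈ Set.Ioc (-Real.pi) Real.pi) :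
    ∃ p : ℂ[X], ∀ μ ∈ S, p.eval (Complex.exp μ) = μ := by
  classical
  refine ⟨Lagrange.interpolate (hS.image Complex.exp).toFinset id Complex.log, fun μ hμ => ?_⟩
  have hnode := Lagrange.eval_interpolate_at_node Complex.log Function.injective_id.injOn
    ((hS.image Complex.exp).mem_toFinset.2 (Set.mem_image_of_mem Complex.exp hμ))
  exact hnode.trans (Complex.log_exp (hS_im μ hμ).1 (hS_im μ hμ).2)

namespace Matrix

variable {n : Type*} [Fintype n] [DecidableEq n]

theorem aeval_diagonal {R : Type*} [CommSemiring R] (d : n → R) (p : R[X]) :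
    aeval (diagonal d) p = diagonal fun i => p.eval (d i) := by
  rw [← diagonalAlgHom_apply (R := R), aeval_algHom_apply, aeval_pi_apply]
  rfl

theorem exp_mapMatrix_algebraMap_real_complex (A : Matrix n n ℝ) :
    NormedSpace.exp ((algebraMap ℝ ℂ).mapMatrix A) =
      (algebraMap ℝ ℂ).mapMatrix (NormedSpace.exp A) := by
  open scoped Matrix.Norms.Operator in
  exact (NormedSpace.map_exp (algebraMap ℝ ℂ).mapMatrix
    (continuous_id.matrix_map Complex.continuous_ofReal) A).symm

theorem exists_units_conj_diagonal_of_conjTranspose_eq_neg {M : Matrix n n ℂ} (hM : Mᴴ = -M) :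
    ∃ (u : (Matrix n n ℂ)ˣ) (d : n → ℂ), M = u * diagonal d * (↑u⁻¹ : Matrix n n ℂ) := by
  have hH : (-Complex.I • M).IsHermitian := by
    simp [IsHermitian, conjTranspose_smul, hM]
  let U := hH.eigenvectorUnitary
  refine ⟨Unitary.toUnits U, Complex.I • (RCLike.ofReal ∘ hH.eigenvalues), ?_⟩
  calc M = Complex.I • (-Complex.I • M) := by
        rw [smul_smul, mul_neg, Complex.I_mul_I, neg_neg, one_smul]
    _ = Complex.I • ((U : Matrix n n ℂ) * diagonal (RCLike.ofReal ∘ hH.eigenvalues) *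
          star (U : Matrix n n ℂ)) :=
        congrArg (Complex.I • ·) hH.spectral_theorem
    _ = _ := by
        rw [diagonal_smul, Matrix.mul_smul, Matrix.smul_mul]
        rfl

theorem aeval_exp_units_conj_diagonal (u : (Matrix n n ℂ)ˣ) (d : n → ℂ) (p : ℂ[X]) :
    aeval (NormedSpace.exp (u * diagonal d * (↑u⁻¹ : Matrix n n ℂ))) p =
      u * diagonal (fun i => p.eval (Complex.exp (d i))) * (↑u⁻¹ : Matrix n n ℂ) := by
  rw [exp_units_conj, exp_diagonal, aeval_units_conj, aeval_diagonal]
  simp [Complex.exp_eq_exp_ℂ]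

theorem aeval_exp_eq_self_of_conjTranspose_eq_neg {M : Matrix n n ℂ} (hM : Mᴴ = -M)
    {p : ℂ[X]} (hp : ∀ μ ∈ spectrum ℂ M, p.eval (Complex.exp μ) = μ) :
    aeval (NormedSpace.exp M) p = M := by
  obtain ⟨u, d, rfl⟩ := exists_units_conj_diagonal_of_conjTranspose_eq_neg hM
  rw [spectrum.units_conjugate, spectrum_diagonal] at hp
  rw [aeval_exp_units_conj_diagonal]
  congr
  funext i
  exact hp _ ⟨i, rfl⟩

theorem semiconjBy_neg_of_semiconjBy_exp {M P : Matrix n n ℂ} (hM : Mᴴ = -M)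
    (hσ : ∀ μ ∈ spectrum ℂ M, |μ.im| < Real.pi)
    (h : SemiconjBy P (NormedSpace.exp M) (NormedSpace.exp (-M))) : SemiconjBy P M (-M) := by
  have hstrip : ∀ μ ∈ spectrum ℂ M ∪ spectrum ℂ (-M), |μ.im| < Real.pi := by
    rintro μ (hμ | hμ)
    · exact hσ μ hμ
    · rw [← spectrum.neg_eq, Set.mem_neg] at hμ
      simpa using hσ (-μ) hμ
  obtain ⟨p, hp⟩ := Complex.exists_polynomial_eval_exp_eq
    ((finite_spectrum M).union (finite_spectrum (-M)))
    fun μ hμ => Set.Ioo_subset_Ioc_self (abs_lt.1 (hstrip μ hμ))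
  have hlog : aeval (NormedSpace.exp M) p = M :=
    aeval_exp_eq_self_of_conjTranspose_eq_neg hM fun μ hμ => hp μ (.inl hμ)
  have hlog_neg : aeval (NormedSpace.exp (-M)) p = -M :=
    aeval_exp_eq_self_of_conjTranspose_eq_neg (by rw [conjTranspose_neg, hM])
      fun μ hμ => hp μ (.inr hμ)
  simpa only [hlog, hlog_neg] using h.aeval p

end Matrix

theorem skew_log_anticommutes_general
    (n : ℕ) (Abar : Matrix (Fin n) (Fin n) ℝ)
    (hskew : Abarᵀ = -Abar)
    (hspec : ∀ μ ∈ spectrum ℂ (Abar.map (Complex.ofReal)),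
      μ.re = 0 ∧ |μ.im| < Real.pi)
    (ρ : Matrix (Fin n) (Fin n) ℝ)
    (hρinv : ρ * ρ = 1)
    (hconj : ρ * NormedSpace.exp Abar * ρ = (NormedSpace.exp Abar)⁻¹) :
    ρ * Abar * ρ = -Abar ∧
      ∀ τ : ℝ, NormedSpace.exp (-(τ • Abar)) * ρ = ρ * NormedSpace.exp (τ • Abar) := by
  let f := (algebraMap ℝ ℂ).mapMatrix (m := Fin n)
  have hexp : SemiconjBy ρ (NormedSpace.exp Abar) (NormedSpace.exp (-Abar)) := by
    rw [SemiconjBy, exp_neg, ← hconj, mul_assoc, hρinv, mul_one]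
  have hexpℂ : SemiconjBy (f ρ) (NormedSpace.exp (f Abar)) (NormedSpace.exp (-f Abar)) := by
    rw [← map_neg, exp_mapMatrix_algebraMap_real_complex, exp_mapMatrix_algebraMap_real_complex]
    exact hexp.map f
  have hskewℂ : (f Abar)ᴴ = -f Abar := by
    rw [← map_neg, ← hskew]
    ext i j
    simp [f]
  have hlogℂ : SemiconjBy (f ρ) (f Abar) (-f Abar) :=
    semiconjBy_neg_of_semiconjBy_exp hskewℂ (fun μ hμ => (hspec μ hμ).2) hexpℂ
  have hlog : SemiconjBy ρ Abar (-Abar) := by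
    apply map_injective Complex.ofReal_injective
    change f (ρ * Abar) = f (-Abar * ρ)
    rw [map_mul, map_mul, map_neg]
    exact hlogℂ
  refine ⟨by rw [hlog.eq, mul_assoc, hρinv, mul_one], fun τ => ?_⟩
  have hlogτ : SemiconjBy ρ (τ • Abar) (-(τ • Abar)) := by
    simpa only [smul_neg] using hlog.smul_right τ
  open scoped Matrix.Norms.Operator in
  exact hlogτ.exp_right.eq.symm

/-- If `Ā ∈ so(n)` has spectrum in `i(-π,π)` and `ρ exp(Ā) ρ = exp(Ā)⁻¹` for an
orthogonal involution `ρ`, then `ρ Ā ρ = -Ā` and `exp(-Āτ) ρ = ρ exp(Āτ)`. -/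
theorem skew_log_anticommutes
    (n : ℕ) (Abar : Matrix (Fin n) (Fin n) ℝ)
    (hskew : Abarᵀ = -Abar)
    (hspec : ∀ μ ∈ spectrum ℂ (Abar.map (Complex.ofReal)),
      μ.re = 0 ∧ |μ.im| < Real.pi)
    (ρ : Matrix (Fin n) (Fin n) ℝ)
    (hρorth : ρᵀ * ρ = 1) (hρinv : ρ * ρ = 1)
    (hconj : ρ * NormedSpace.exp Abar * ρ = (NormedSpace.exp Abar)⁻¹) :
    ρ * Abar * ρ = -Abar ∧
      ∀ τ : ℝ, NormedSpace.exp (-(τ • Abar)) * ρ = ρ * NormedSpace.exp (τ • Abar) :=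
  skew_log_anticommutes_general n Abar hskew hspec ρ hρinv hconj
end

section
/- If B, C are real skew-symmetric n×n matrices with all eigenvalues in the open interval i(-π, π) and exp(B) = exp(C), then B = C. -/
/-!
On the strip `|Im z| < π` the complex exponential is inverted by `Complex.log`, and it maps the
strip into the slit plane, where `Complex.log` is continuous. Hence for a normal element `a` of a
C⋆-algebra with spectrum in the strip, the continuous functional calculus gives
`cfc Complex.log (exp a) = a`, so `exp` is injective on such elements. A real skew-symmetric
matrix becomes a skew-adjoint, hence normal, complex matrix, and complexification commutes with
`exp`.
-/

open Matrix

theorem cfc_log_exp_of_abs_im_lt_pi {A : Type*} [CStarAlgebra A] {a : A} [IsStarNormal a]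
    (ha : ∀ μ ∈ spectrum ℂ a, |μ.im| < Real.pi) :
    cfc Complex.log (NormedSpace.exp a) = a := by
  have h_strip : ∀ μ ∈ spectrum ℂ a, μ ∈ Complex.expOpenPartialHomeomorph.source :=
    fun μ hμ => abs_lt.mp (ha μ hμ)
  have h_log_cont : ContinuousOn Complex.log (Complex.exp '' spectrum ℂ a) := by
    refine Complex.expOpenPartialHomeomorph.continuousOn_invFun.mono ?_
    rintro _ ⟨μ, hμ, rfl⟩
    exact Complex.expOpenPartialHomeomorph.map_source (h_strip μ hμ)
  calc cfc Complex.log (NormedSpace.exp a)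
      = cfc (fun z => Complex.log (Complex.exp z)) a := by
        rw [← CFC.complex_exp_eq_normedSpace_exp, cfc_comp' Complex.log Complex.exp a h_log_cont]
    _ = cfc id a := cfc_congr fun μ hμ => Complex.expOpenPartialHomeomorph.left_inv (h_strip μ hμ)
    _ = a := cfc_id ℂ a

theorem exp_injOn_isStarNormal_abs_im_lt_pi {A : Type*} [CStarAlgebra A] :
    Set.InjOn NormedSpace.exp
      {a : A | IsStarNormal a ∧ ∀ μ ∈ spectrum ℂ a, |μ.im| < Real.pi} := by
  rintro a ⟨ha_normal, ha⟩ b ⟨hb_normal, hb⟩ hab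
  rw [← cfc_log_exp_of_abs_im_lt_pi ha, hab, cfc_log_exp_of_abs_im_lt_pi hb]

open scoped Matrix.Norms.L2Operator in
theorem Matrix.exp_map_ofReal {m : Type*} [Fintype m] [DecidableEq m] (M : Matrix m m ℝ) :
    (NormedSpace.exp M).map Complex.ofReal = NormedSpace.exp (M.map Complex.ofReal) :=
  NormedSpace.map_exp_of_mem_ball (𝕂 := ℝ) Complex.ofRealHom.mapMatrix
    (continuous_id.matrix_map Complex.continuous_ofReal) M <|
    (NormedSpace.expSeries_radius_eq_top ℝ (Matrix m m ℝ)).symm ▸ edist_lt_top _ _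

theorem Matrix.isStarNormal_map_ofReal_of_transpose_eq_neg {m : Type*} [Fintype m]
    [DecidableEq m] {M : Matrix m m ℝ} (hM : Mᵀ = -M) : IsStarNormal (M.map Complex.ofReal) := by
  refine skewAdjoint.isStarNormal_of_mem (R := Matrix m m ℂ) ?_
  rw [skewAdjoint.mem_iff, star_eq_conjTranspose,
    ← conjTranspose_map _ fun _ => (Complex.conj_ofReal _).symm,
    conjTranspose_eq_transpose_of_trivial, hM, Matrix.map_neg _ Complex.ofReal_neg]

/-- The matrix exponential is injective on real skew-symmetric matrices whose
eigenvalues lie in the open strip `i(-π, π)`. -/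
theorem exp_injective_on_skew_small_spectrum
    (n : ℕ) (B C : Matrix (Fin n) (Fin n) ℝ)
    (hB : Bᵀ = -B) (hC : Cᵀ = -C)
    (hBspec : ∀ μ ∈ spectrum ℂ (B.map (Complex.ofReal)), μ.re = 0 ∧ |μ.im| < Real.pi)
    (hCspec : ∀ μ ∈ spectrum ℂ (C.map (Complex.ofReal)), μ.re = 0 ∧ |μ.im| < Real.pi)
    (hexp : NormedSpace.exp B = NormedSpace.exp C) :
    B = C := by
  -- Any C⋆-norm would do: `NormedSpace.exp` on matrices does not depend on the norm.
  open scoped Matrix.Norms.L2Operator in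
  refine Matrix.map_injective Complex.ofReal_injective <|
    exp_injOn_isStarNormal_abs_im_lt_pi
      ⟨isStarNormal_map_ofReal_of_transpose_eq_neg hB, fun μ hμ => (hBspec μ hμ).2⟩
      ⟨isStarNormal_map_ofReal_of_transpose_eq_neg hC, fun μ hμ => (hCspec μ hμ).2⟩ ?_
  rw [← exp_map_ofReal, ← exp_map_ofReal, hexp]
end

section
/- Let A : ℝ → so(n) be smooth, 1-periodic, satisfying ρA(θ)ρ = -A(-θ) for an orthogonal involution ρ, and let Ā ∈ so(n) satisfy exp(Ā) = Φ(1) with σ(Ā) ⊂ i(-π,π), where Φ is the fundamental solution. Then the map v(u,θ) = exp(Āθ)Φ(θ)⁻¹u satisfies v(ρu, -θ) = ρ v(u, θ) for all u ∈ ℝⁿ, θ ∈ ℝ; i.e., the transformation Ψ(u,θ) = (v(u,θ), θ) commutes with the reversibility map R(u,θ) = (ρu, -θ). -/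
open Matrix


lemma resolvent_conj {n : ℕ} (P M : Matrix (Fin n) (Fin n) ℂ) (hP : P * P = 1) (μ : ℂ) :
    P * (algebraMap ℂ (Matrix (Fin n) (Fin n) ℂ) μ - M) * P
      = algebraMap ℂ (Matrix (Fin n) (Fin n) ℂ) μ - P * M * P := by
  rw [Algebra.algebraMap_eq_smul_one, mul_sub, sub_mul, mul_smul_comm, smul_mul_assoc,
    mul_one, hP]

lemma conj_conj {n : ℕ} (P M : Matrix (Fin n) (Fin n) ℂ) (hP : P * P = 1) :
    P * (P * M * P) * P = M := by
  have : P * (P * M * P) * P = (P * P) * M * (P * P) := by noncomm_ring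
  rw [this, hP, one_mul, mul_one]

lemma spec_conj {n : ℕ} (P M : Matrix (Fin n) (Fin n) ℂ) (hP : P * P = 1) :
    spectrum ℂ (P * M * P) = spectrum ℂ M := by
  have hPu : IsUnit P := ⟨⟨P, P, hP, hP⟩, rfl⟩
  have key : ∀ N : Matrix (Fin n) (Fin n) ℂ, spectrum ℂ N ⊆ spectrum ℂ (P * N * P) := by
    intro N μ hμ
    rw [spectrum.mem_iff] at hμ ⊢
    intro hU
    have e : P * (algebraMap ℂ (Matrix (Fin n) (Fin n) ℂ) μ - P * N * P) * P
        = algebraMap ℂ (Matrix (Fin n) (Fin n) ℂ) μ - N := by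
      rw [resolvent_conj P (P * N * P) hP μ, conj_conj P N hP]
    exact hμ (e ▸ ((hPu.mul hU).mul hPu))
  refine le_antisymm ?_ (key M)
  have h2 := key (P * M * P)
  rw [conj_conj P M hP] at h2
  exact h2

lemma skew_decomp {n : ℕ} (X : Matrix (Fin n) (Fin n) ℂ) (hX : Xᴴ = -X) :
    ∃ (U : Matrix (Fin n) (Fin n) ℂ) (d : Fin n → ℝ),
      star U * U = 1 ∧ U * star U = 1 ∧
      X = U * diagonal (fun k => (d k : ℂ) * Complex.I) * star U := by
  have hH : ((-Complex.I) • X).IsHermitian := by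
    unfold Matrix.IsHermitian
    rw [conjTranspose_smul, hX]
    simp [smul_neg, neg_smul]
  refine ⟨hH.eigenvectorUnitary, hH.eigenvalues, ?_, ?_, ?_⟩
  · exact Unitary.coe_star_mul_self _
  · exact Unitary.coe_mul_star_self _
  · have hst := hH.spectral_theorem
    have hX2 : X = Complex.I • ((hH.eigenvectorUnitary : Matrix (Fin n) (Fin n) ℂ) *
        diagonal (RCLike.ofReal ∘ hH.eigenvalues) *
        star (hH.eigenvectorUnitary : Matrix (Fin n) (Fin n) ℂ)) := by
      rw [Unitary.conjStarAlgAut_apply] at hst; rw [← hst, smul_smul]; simp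
    have hd : (Complex.I • diagonal (RCLike.ofReal ∘ hH.eigenvalues) : Matrix (Fin n) (Fin n) ℂ)
        = diagonal fun k => (hH.eigenvalues k : ℂ) * Complex.I := by
      ext i j
      by_cases hij : i = j <;>
        simp [Matrix.diagonal, hij, Function.comp, mul_comm, Matrix.smul_apply]
    rw [← hd, mul_smul_comm, smul_mul_assoc]; exact hX2

lemma diag_mem_spec {n : ℕ} (U : Matrix (Fin n) (Fin n) ℂ) (v : Fin n → ℂ)
    (hU1 : star U * U = 1) (hU2 : U * star U = 1) (k : Fin n) :
    v k ∈ spectrum ℂ (U * diagonal v * star U) := by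
  rw [spectrum.mem_iff]
  intro hun
  rw [Matrix.isUnit_iff_isUnit_det] at hun
  have e : algebraMap ℂ (Matrix (Fin n) (Fin n) ℂ) (v k) - U * diagonal v * star U
      = U * (diagonal (fun i => v k - v i)) * star U := by
    rw [Matrix.algebraMap_eq_diagonal]
    have h1 : (diagonal (algebraMap ℂ (Fin n → ℂ) (v k)) : Matrix (Fin n) (Fin n) ℂ)
        = U * diagonal (fun _ => v k) * star U := by
      have : (diagonal (fun _ => v k) : Matrix (Fin n) (Fin n) ℂ) = v k • 1 := by
        simp [Matrix.smul_eq_diagonal_mul]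
      rw [show (diagonal (algebraMap ℂ (Fin n → ℂ) (v k)) : Matrix (Fin n) (Fin n) ℂ)
          = diagonal (fun _ => v k) from rfl, this]
      rw [mul_smul_comm, smul_mul_assoc, mul_one, hU2]
    rw [h1, ← Matrix.sub_mul, ← Matrix.mul_sub, Matrix.diagonal_sub]
  rw [e] at hun
  rw [Matrix.det_mul, Matrix.det_mul, Matrix.det_diagonal] at hun
  rw [Finset.prod_eq_zero (Finset.mem_univ k) (by simp)] at hun
  simp at hun

lemma exp_of_decomp {n : ℕ} (U : Matrix (Fin n) (Fin n) ℂ) (w : Fin n → ℂ)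
    (hU1 : star U * U = 1) (hU2 : U * star U = 1) :
    NormedSpace.exp (U * diagonal w * star U)
      = U * diagonal (fun k => Complex.exp (w k)) * star U := by
  have hUinv : U⁻¹ = star U := Matrix.inv_eq_left_inv hU1
  have hUu : IsUnit U := ⟨⟨U, star U, hU2, hU1⟩, rfl⟩
  rw [← hUinv, Matrix.exp_conj U (diagonal w) hUu, Matrix.exp_diagonal]
  congr 1
  ext k
  simp [Pi.exp_def, ← Complex.exp_eq_exp_ℂ]

lemma skew_log_unique {n : ℕ} (X Y : Matrix (Fin n) (Fin n) ℂ)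
    (hX : Xᴴ = -X) (hY : Yᴴ = -Y)
    (hXs : ∀ μ ∈ spectrum ℂ X, |μ.im| < Real.pi)
    (hYs : ∀ μ ∈ spectrum ℂ Y, |μ.im| < Real.pi)
    (h : NormedSpace.exp X = NormedSpace.exp Y) : X = Y := by
  obtain ⟨U, d, hU1, hU2, hXd⟩ := skew_decomp X hX
  obtain ⟨V, e, hV1, hV2, hYd⟩ := skew_decomp Y hY
  have hdk : ∀ k, |d k| < Real.pi := by
    intro k
    have := hXs _ (hXd ▸ diag_mem_spec U (fun k => (d k : ℂ) * Complex.I) hU1 hU2 k)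
    simpa using this
  have hek : ∀ k, |e k| < Real.pi := by
    intro k
    have := hYs _ (hYd ▸ diag_mem_spec V (fun k => (e k : ℂ) * Complex.I) hV1 hV2 k)
    simpa using this
  have hexp : U * diagonal (fun k => Complex.exp ((d k : ℂ) * Complex.I)) * star U
      = V * diagonal (fun k => Complex.exp ((e k : ℂ) * Complex.I)) * star V := by
    rw [← exp_of_decomp U _ hU1 hU2, ← exp_of_decomp V _ hV1 hV2, ← hXd, ← hYd, h]
  set W := star U * V with hWdef
  have hW : diagonal (fun k => Complex.exp ((d k : ℂ) * Complex.I)) * W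
      = W * diagonal (fun k => Complex.exp ((e k : ℂ) * Complex.I)) := by
    calc diagonal (fun k => Complex.exp ((d k : ℂ) * Complex.I)) * W
        = star U * (U * diagonal (fun k => Complex.exp ((d k : ℂ) * Complex.I)) * star U) * V := by
          rw [show star U * (U * diagonal (fun k => Complex.exp ((d k : ℂ) * Complex.I)) * star U) * V
            = (star U * U) * diagonal (fun k => Complex.exp ((d k : ℂ) * Complex.I)) * (star U * V) from by
              noncomm_ring, hU1, one_mul]
      _ = star U * (V * diagonal (fun k => Complex.exp ((e k : ℂ) * Complex.I)) * star V) * V := by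
          rw [hexp]
      _ = W * diagonal (fun k => Complex.exp ((e k : ℂ) * Complex.I)) := by
          rw [show star U * (V * diagonal (fun k => Complex.exp ((e k : ℂ) * Complex.I)) * star V) * V
            = (star U * V) * diagonal (fun k => Complex.exp ((e k : ℂ) * Complex.I)) * (star V * V) from by
              noncomm_ring, hV1, mul_one]
  have hWd : diagonal (fun k => (d k : ℂ) * Complex.I) * W
      = W * diagonal (fun k => (e k : ℂ) * Complex.I) := by
    ext i j
    rw [Matrix.diagonal_mul, Matrix.mul_diagonal]
    rcases eq_or_ne (W i j) 0 with h0 | h0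
    · rw [h0]; ring
    · have hee : Complex.exp ((d i : ℂ) * Complex.I) = Complex.exp ((e j : ℂ) * Complex.I) := by
        have := congrFun (congrFun hW i) j
        rw [Matrix.diagonal_mul, Matrix.mul_diagonal] at this
        rw [mul_comm (W i j)] at this
        exact mul_right_cancel₀ h0 this
      obtain ⟨m, hm⟩ := Complex.exp_eq_exp_iff_exists_int.mp hee
      have him : d i = e j + m * (2 * Real.pi) := by
        have := congrArg Complex.im hm
        simpa [Complex.mul_I_im] using this
      have hm0 : m = 0 := by
        have h2π : (0:ℝ) < 2 * Real.pi := by positivity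
        have hle : |d i - e j| ≤ |d i| + |e j| := by
          rw [sub_eq_add_neg]
          simpa using abs_add_le (d i) (-(e j))
        have hlt : |d i - e j| < 2 * Real.pi :=
          lt_of_le_of_lt hle (by linarith [hdk i, hek j])
        have hdm : d i - e j = m * (2 * Real.pi) := by rw [him]; ring
        rw [hdm, abs_mul, abs_of_pos h2π] at hlt
        have h4 : |(m : ℝ)| < 1 := by nlinarith
        have h6 := abs_lt.mp (show |m| < 1 by exact_mod_cast h4)
        omega
      rw [hm0] at him
      simp at him
      rw [him]; ring
  calc X = U * diagonal (fun k => (d k : ℂ) * Complex.I) * star U := hXd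
    _ = U * (diagonal (fun k => (d k : ℂ) * Complex.I) * W) * star V := by
        rw [hWdef]
        rw [show U * (diagonal (fun k => (d k : ℂ) * Complex.I) * (star U * V)) * star V
          = U * diagonal (fun k => (d k : ℂ) * Complex.I) * star U * (V * star V) from by noncomm_ring,
          hV2, mul_one]
    _ = U * (W * diagonal (fun k => (e k : ℂ) * Complex.I)) * star V := by rw [hWd]
    _ = V * diagonal (fun k => (e k : ℂ) * Complex.I) * star V := by
        rw [hWdef]
        rw [show U * (star U * V * diagonal (fun k => (e k : ℂ) * Complex.I)) * star V
          = (U * star U) * (V * diagonal (fun k => (e k : ℂ) * Complex.I) * star V) from by noncomm_ring,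
          hU2, one_mul]
    _ = Y := hYd.symm

/-- exp commutes with complexification of real matrices. -/
lemma map_exp_complexify {n : ℕ} (M : Matrix (Fin n) (Fin n) ℝ) :
    (NormedSpace.exp M).map Complex.ofReal = NormedSpace.exp (M.map Complex.ofReal) := by
  letI : SeminormedRing (Matrix (Fin n) (Fin n) ℝ) := Matrix.linftyOpSemiNormedRing
  letI : NormedRing (Matrix (Fin n) (Fin n) ℝ) := Matrix.linftyOpNormedRing
  letI : NormedAlgebra ℝ (Matrix (Fin n) (Fin n) ℝ) := Matrix.linftyOpNormedAlgebra
  letI : NormedRing (Matrix (Fin n) (Fin n) ℂ) := Matrix.linftyOpNormedRing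
  letI : NormedAlgebra ℝ (Matrix (Fin n) (Fin n) ℂ) := Matrix.linftyOpNormedAlgebra
  letI : NormedAlgebra ℚ (Matrix (Fin n) (Fin n) ℝ) := NormedAlgebra.restrictScalars ℚ ℝ _
  letI : NormedAlgebra ℚ (Matrix (Fin n) (Fin n) ℂ) := NormedAlgebra.restrictScalars ℚ ℝ _
  have hf : Continuous (⇑(Complex.ofRealHom.mapMatrix :
      Matrix (Fin n) (Fin n) ℝ →+* Matrix (Fin n) (Fin n) ℂ)) := by
    show Continuous fun M : Matrix (Fin n) (Fin n) ℝ => M.map Complex.ofReal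
    exact Continuous.matrix_map continuous_id Complex.continuous_ofReal
  have := NormedSpace.map_exp
    (Complex.ofRealHom.mapMatrix : Matrix (Fin n) (Fin n) ℝ →+* Matrix (Fin n) (Fin n) ℂ) hf M
  exact this

/-- constancy of pairings of solutions of the linear ODE. -/
lemma pairing {n : ℕ} (A : ℝ → Matrix (Fin n) (Fin n) ℝ)
    (hAskew : ∀ τ, (A τ)ᵀ = -(A τ))
    (Ψ Θ : ℝ → Matrix (Fin n) (Fin n) ℝ)
    (hΨ : ∀ τ i j, HasDerivAt (fun s => Ψ s i j) ((A τ * Ψ τ) i j) τ)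
    (hΘ : ∀ τ i j, HasDerivAt (fun s => Θ s i j) ((A τ * Θ τ) i j) τ) :
    ∀ τ, (Ψ τ)ᵀ * Θ τ = (Ψ 0)ᵀ * Θ 0 := by
  intro τ
  ext i j
  have key : ∀ t : ℝ, HasDerivAt (fun s => ((Ψ s)ᵀ * Θ s) i j) 0 t := by
    intro t
    have h1 : HasDerivAt (fun s => ∑ k, Ψ s k i * Θ s k j)
        (∑ k, ((A t * Ψ t) k i * Θ t k j + Ψ t k i * (A t * Θ t) k j)) t :=
      HasDerivAt.fun_sum fun k _ => (hΨ t k i).mul (hΘ t k j)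
    have h2 : (∑ k, ((A t * Ψ t) k i * Θ t k j + Ψ t k i * (A t * Θ t) k j)) = 0 := by
      have e1 : (∑ k, ((A t * Ψ t) k i * Θ t k j + Ψ t k i * (A t * Θ t) k j))
          = ((A t * Ψ t)ᵀ * Θ t + (Ψ t)ᵀ * (A t * Θ t)) i j := by
        simp [Matrix.mul_apply, Matrix.add_apply, Matrix.transpose_apply,
          Finset.sum_add_distrib, mul_comm]
      have e2 : ((A t * Ψ t)ᵀ * Θ t + (Ψ t)ᵀ * (A t * Θ t)) = 0 := by
        rw [Matrix.transpose_mul, hAskew]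
        noncomm_ring
      rw [e1, e2]
      simp
    have h1' : HasDerivAt (fun s => ((Ψ s)ᵀ * Θ s) i j)
        (∑ k, ((A t * Ψ t) k i * Θ t k j + Ψ t k i * (A t * Θ t) k j)) t := by
      simp only [Matrix.mul_apply, Matrix.transpose_apply]
      exact h1
    rw [h2] at h1'
    exact h1'
  have : (fun s => ((Ψ s)ᵀ * Θ s) i j) τ = (fun s => ((Ψ s)ᵀ * Θ s) i j) 0 :=
    is_const_of_deriv_eq_zero (fun t => (key t).differentiableAt)
      (fun t => (key t).deriv) τ 0
  simpa using this

lemma map_one' {n : ℕ} : ((1 : Matrix (Fin n) (Fin n) ℝ)).map Complex.ofReal = 1 := by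
  ext i j
  simp [Matrix.map_apply, Matrix.one_apply, apply_ite Complex.ofReal]

lemma map_mul' {n : ℕ} (M N : Matrix (Fin n) (Fin n) ℝ) :
    (M * N).map Complex.ofReal = M.map Complex.ofReal * N.map Complex.ofReal := by
  ext i j
  simp only [Matrix.mul_apply, Matrix.map_apply]
  push_cast
  rfl

lemma map_neg' {n : ℕ} (M : Matrix (Fin n) (Fin n) ℝ) :
    (-M).map Complex.ofReal = -(M.map Complex.ofReal) := by
  ext i j
  simp [Matrix.map_apply]

lemma map_skew {n : ℕ} (M : Matrix (Fin n) (Fin n) ℝ) (h : Mᵀ = -M) :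
    (M.map Complex.ofReal)ᴴ = -(M.map Complex.ofReal) := by
  ext i j
  have h2 := congrFun (congrFun h i) j
  simp only [Matrix.transpose_apply, Matrix.neg_apply] at h2
  simp only [Matrix.conjTranspose_apply, Matrix.map_apply, Matrix.neg_apply,
    Complex.star_def, Complex.conj_ofReal]
  exact_mod_cast h2

lemma spec_neg' {n : ℕ} (M : Matrix (Fin n) (Fin n) ℂ) (μ : ℂ)
    (h : μ ∈ spectrum ℂ (-M)) : -μ ∈ spectrum ℂ M := by
  rw [spectrum.mem_iff] at h ⊢
  intro hU
  apply h
  have e : algebraMap ℂ (Matrix (Fin n) (Fin n) ℂ) μ - (-M)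
      = -(algebraMap ℂ (Matrix (Fin n) (Fin n) ℂ) (-μ) - M) := by
    simp [map_neg]
    abel
  rw [e]
  exact hU.neg

lemma expR_eq_expC {n : ℕ} (M : Matrix (Fin n) (Fin n) ℂ) :
    NormedSpace.exp M = NormedSpace.exp M := by
  rfl

/-- The integrating change of variables `v(u,θ) = exp(Āθ)Φ(θ)⁻¹u` commutes with the
reversibility map `R(u,θ) = (ρu, -θ)`. -/
theorem change_of_variables_preserves_reversibility
    (n : ℕ) (A Φ : ℝ → Matrix (Fin n) (Fin n) ℝ)
    (hAsmooth : ∀ i j, ContDiff ℝ (⊤ : ℕ∞) (fun τ => A τ i j))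
    (hAskew : ∀ τ, (A τ)ᵀ = -(A τ))
    (hAper : ∀ τ, A (τ + 1) = A τ)
    (ρ : Matrix (Fin n) (Fin n) ℝ)
    (hρorth : ρᵀ * ρ = 1) (hρinv : ρ * ρ = 1)
    (hrev : ∀ θ, ρ * A θ * ρ = -A (-θ))
    (hΦ0 : Φ 0 = 1)
    (hΦ' : ∀ τ i j, HasDerivAt (fun s => Φ s i j) ((A τ * Φ τ) i j) τ)
    (Abar : Matrix (Fin n) (Fin n) ℝ)
    (hAbarskew : Abarᵀ = -Abar)
    (hAbarexp : NormedSpace.exp Abar = Φ 1)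
    (hAbarspec : ∀ μ ∈ spectrum ℂ (Abar.map (Complex.ofReal)),
      μ.re = 0 ∧ |μ.im| < Real.pi)
    (v : (Fin n → ℝ) → ℝ → Fin n → ℝ)
    (hv : ∀ u θ, v u θ = (NormedSpace.exp (θ • Abar) * (Φ θ)⁻¹) *ᵥ u) :
    ∀ (u : Fin n → ℝ) (θ : ℝ), v (ρ *ᵥ u) (-θ) = ρ *ᵥ v u θ := by
  -- basic consequences of orthogonality of ρ
  have hρT : ρᵀ = ρ := by
    calc ρᵀ = ρᵀ * (ρ * ρ) := by rw [hρinv, mul_one]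
      _ = (ρᵀ * ρ) * ρ := by rw [mul_assoc]
      _ = ρ := by rw [hρorth, one_mul]
  -- Φ is orthogonal
  have horth : ∀ τ, (Φ τ)ᵀ * Φ τ = 1 := by
    intro τ
    have := pairing A hAskew Φ Φ hΦ' hΦ' τ
    rw [hΦ0] at this
    simpa using this
  have horth' : ∀ τ, Φ τ * (Φ τ)ᵀ = 1 := fun τ => mul_eq_one_comm.mp (horth τ)
  -- uniqueness of solutions of the linear ODE
  have huniq : ∀ (Ψ : ℝ → Matrix (Fin n) (Fin n) ℝ),
      (∀ τ i j, HasDerivAt (fun s => Ψ s i j) ((A τ * Ψ τ) i j) τ) →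
      ∀ τ, Ψ τ = Φ τ * Ψ 0 := by
    intro Ψ hΨ τ
    have hp := pairing A hAskew Φ Ψ hΦ' hΨ τ
    rw [hΦ0] at hp
    simp only [Matrix.transpose_one, one_mul] at hp
    calc Ψ τ = (Φ τ * (Φ τ)ᵀ) * Ψ τ := by rw [horth' τ, one_mul]
      _ = Φ τ * ((Φ τ)ᵀ * Ψ τ) := by rw [mul_assoc]
      _ = Φ τ * Ψ 0 := by rw [hp]
  -- the reversed-conjugated flow solves the same ODE
  have hrevsol : ∀ τ (i j : Fin n), HasDerivAt (fun s => (ρ * Φ (-s) * ρ) i j)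
      ((A τ * (ρ * Φ (-τ) * ρ)) i j) τ := by
    intro τ i j
    have hin : ∀ k l, HasDerivAt (fun s : ℝ => Φ (-s) k l)
        ((A (-τ) * Φ (-τ)) k l * (-1)) τ := by
      intro k l
      exact HasDerivAt.comp τ (hΦ' (-τ) k l) (hasDerivAt_neg τ)
    have h1 : HasDerivAt (fun s => ∑ l, (∑ k, ρ i k * Φ (-s) k l) * ρ l j)
        (∑ l, (∑ k, ρ i k * ((A (-τ) * Φ (-τ)) k l * (-1))) * ρ l j) τ :=
      HasDerivAt.fun_sum fun l _ =>
        ((HasDerivAt.fun_sum fun k _ => ((hin k l).const_mul (ρ i k))).mul_const (ρ l j))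
    have hmat : A τ * (ρ * Φ (-τ) * ρ) = ρ * (-(A (-τ) * Φ (-τ))) * ρ := by
      have h5 := hrev (-τ)
      rw [neg_neg] at h5
      have h6 : A τ = -(ρ * A (-τ) * ρ) := by rw [h5, neg_neg]
      rw [h6]
      have h7 : -(ρ * A (-τ) * ρ) * (ρ * Φ (-τ) * ρ)
          = -(ρ * A (-τ) * (ρ * ρ) * Φ (-τ) * ρ) := by noncomm_ring
      rw [h7, hρinv]
      noncomm_ring
    have hval : (∑ l, (∑ k, ρ i k * ((A (-τ) * Φ (-τ)) k l * (-1))) * ρ l j)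
        = (ρ * (-(A (-τ) * Φ (-τ))) * ρ) i j := by
      simp [Matrix.mul_apply, Matrix.neg_apply, mul_neg, neg_mul, Finset.sum_neg_distrib]
    rw [hmat, ← hval]
    simp only [Matrix.mul_apply]
    exact h1
  have hΨ1 : ∀ τ, ρ * Φ (-τ) * ρ = Φ τ := by
    intro τ
    have := huniq (fun s => ρ * Φ (-s) * ρ) hrevsol τ
    simp only [neg_zero, hΦ0, mul_one, hρinv] at this
    simpa using this
  -- periodicity
  have hpersol : ∀ τ (i j : Fin n), HasDerivAt (fun s => Φ (s + 1) i j)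
      ((A τ * Φ (τ + 1)) i j) τ := by
    intro τ i j
    have := HasDerivAt.comp τ (hΦ' (τ + 1) i j) ((hasDerivAt_id τ).add_const 1)
    simpa [hAper, Function.comp_def] using this
  have hper : ∀ τ, Φ (τ + 1) = Φ τ * Φ 1 := by
    intro τ
    have := huniq (fun s => Φ (s + 1)) hpersol τ
    simpa using this
  -- inverses
  have hΦinv : ∀ τ, (Φ τ)⁻¹ = (Φ τ)ᵀ := fun τ => Matrix.inv_eq_left_inv (horth τ)
  have hρu : IsUnit ρ := ⟨⟨ρ, ρ, hρinv, hρinv⟩, rfl⟩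
  have hρmatinv : ρ⁻¹ = ρ := Matrix.inv_eq_left_inv hρinv
  have hexpconj : ∀ M : Matrix (Fin n) (Fin n) ℝ,
      NormedSpace.exp (ρ * M * ρ) = ρ * NormedSpace.exp M * ρ := by
    intro M
    have := Matrix.exp_conj ρ M hρu
    rw [hρmatinv] at this
    exact this
  -- the key identity ρ Ā ρ = -Ā
  have hkey : ρ * Abar * ρ = -Abar := by
    have hexpeq : NormedSpace.exp (ρ * Abar * ρ) = NormedSpace.exp (-Abar) := by
      rw [hexpconj, hAbarexp, Matrix.exp_neg, hAbarexp]
      have h1 := hΨ1 (-1)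
      rw [neg_neg] at h1
      rw [h1]
      have h2 := hper (-1)
      rw [show (-1 : ℝ) + 1 = 0 by ring, hΦ0] at h2
      exact (Matrix.inv_eq_left_inv h2.symm).symm
    -- complexify
    have hC := congrArg (fun M : Matrix (Fin n) (Fin n) ℝ => M.map Complex.ofReal) hexpeq
    rw [map_exp_complexify, map_exp_complexify, expR_eq_expC, expR_eq_expC] at hC
    -- skewness of both sides
    have hBskew : (ρ * Abar * ρ)ᵀ = -(ρ * Abar * ρ) := by
      rw [Matrix.transpose_mul, Matrix.transpose_mul, hρT, hAbarskew]
      noncomm_ring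
    have hNskew : (-Abar)ᵀ = -(-Abar) := by
      rw [Matrix.transpose_neg, hAbarskew]
    -- spectra
    have hρc : (ρ.map Complex.ofReal) * (ρ.map Complex.ofReal) = 1 := by
      rw [← map_mul', hρinv, map_one']
    have hBmap : (ρ * Abar * ρ).map Complex.ofReal
        = (ρ.map Complex.ofReal) * (Abar.map Complex.ofReal) * (ρ.map Complex.ofReal) := by
      rw [map_mul', map_mul']
    have hBspec : ∀ μ ∈ spectrum ℂ ((ρ * Abar * ρ).map Complex.ofReal), |μ.im| < Real.pi := by
      intro μ hμ
      rw [hBmap, spec_conj _ _ hρc] at hμ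
      exact (hAbarspec μ hμ).2
    have hNspec : ∀ μ ∈ spectrum ℂ ((-Abar).map Complex.ofReal), |μ.im| < Real.pi := by
      intro μ hμ
      rw [map_neg'] at hμ
      have := (hAbarspec (-μ) (spec_neg' _ μ hμ)).2
      simpa using this
    have := skew_log_unique _ _ (map_skew _ hBskew) (map_skew _ hNskew) hBspec hNspec hC
    -- descend to ℝ
    ext i j
    have h2 := congrArg (fun X : Matrix (Fin n) (Fin n) ℂ => X i j) this
    simp only [Matrix.map_apply] at h2
    have h3 : ((ρ * Abar * ρ) i j : ℂ) = ((-Abar) i j : ℂ) := h2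
    exact_mod_cast h3
  -- final computation
  intro u θ
  rw [hv, hv, Matrix.mulVec_mulVec, Matrix.mulVec_mulVec]
  congr 1
  have hexpθ : NormedSpace.exp ((-θ) • Abar) = ρ * NormedSpace.exp (θ • Abar) * ρ := by
    have e : ρ * (θ • Abar) * ρ = (-θ) • Abar := by
      rw [mul_smul_comm, smul_mul_assoc, hkey]
      simp
    rw [← e, hexpconj]
  have hΦnegθ : Φ (-θ) = ρ * Φ θ * ρ := by
    have := hΨ1 (-θ)
    rw [neg_neg] at this
    exact this.symm
  have hΦnegθinv : (Φ (-θ))⁻¹ = ρ * (Φ θ)⁻¹ * ρ := by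
    apply Matrix.inv_eq_left_inv
    rw [hΦnegθ, hΦinv θ]
    have e : (ρ * (Φ θ)ᵀ * ρ) * (ρ * Φ θ * ρ) = ρ * ((Φ θ)ᵀ * (ρ * ρ) * Φ θ) * ρ := by
      noncomm_ring
    rw [e, hρinv, mul_one, horth θ, mul_one, hρinv]
  rw [hexpθ, hΦnegθinv]
  have e2 : (ρ * NormedSpace.exp (θ • Abar) * ρ) * (ρ * (Φ θ)⁻¹ * ρ) * ρ
      = ρ * (NormedSpace.exp (θ • Abar) * (ρ * ρ) * (Φ θ)⁻¹ * (ρ * ρ)) := by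
    noncomm_ring
  rw [e2, hρinv, mul_one, mul_one]
end
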